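/- arXiv:1810.01704 — 2 statements merged into one kernel-verified Lean document; each statement's English description precedes it below -/
import Mathlib

section
/- Any two nontrivial, countable, locally finite, existentially closed Heyting algebras are isomorphic as Heyting algebras (there is a bijective map between them preserving ⊥, ⊤, ⊓, ⊔, ⇨). -/
/-- Formal Heyting terms in `n` variables. -/
inductive HeytingTerm (n : ℕ) : Type
  | var : Fin n → HeytingTerm n
  | bot : HeytingTerm n
  | top : HeytingTerm n
  | inf : HeytingTerm n → HeytingTerm n → HeytingTerm n
  | sup : HeytingTerm n → HeytingTerm n → HeytingTerm n
  | himp : HeytingTerm n → HeytingTerm n → HeytingTerm n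

namespace HeytingTerm

/-- Evaluation of a Heyting term in a Heyting algebra. -/
def eval {n : ℕ} {H : Type*} [HeytingAlgebra H] (v : Fin n → H) : HeytingTerm n → H
  | var i => v i
  | bot => ⊥
  | top => ⊤
  | inf a b => a.eval v ⊓ b.eval v
  | sup a b => a.eval v ⊔ b.eval v
  | himp a b => a.eval v ⇨ b.eval v

/-- The degree of a Heyting term: the maximal number of nested occurrences of `⇨`. -/
def degree {n : ℕ} : HeytingTerm n → ℕ
  | var _ => 0
  | bot => 0
  | top => 0
  | inf a b => max a.degree b.degree
  | sup a b => max a.degree b.degree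
  | himp a b => max a.degree b.degree + 1

end HeytingTerm

/-- `b` is a solution of the system `(t, s₁, …, s_κ)` with parameters `a`. -/
def IsSolution {l m κ : ℕ} {H : Type*} [HeytingAlgebra H]
    (t : HeytingTerm (l + m)) (s : Fin κ → HeytingTerm (l + m))
    (a : Fin l → H) (b : Fin m → H) : Prop :=
  t.eval (Fin.append a b) = ⊤ ∧ ∀ k, (s k).eval (Fin.append a b) ≠ ⊤

/-- The system `(t, s₁, …, s_κ)` with parameters `a` has a solution in `H`. -/
def HasSolution {l m κ : ℕ} {H : Type*} [HeytingAlgebra H]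
    (t : HeytingTerm (l + m)) (s : Fin κ → HeytingTerm (l + m)) (a : Fin l → H) : Prop :=
  ∃ b : Fin m → H, IsSolution t s a b

/-- A Heyting algebra is existentially closed if every system with parameters in `H`
having a solution in an extension of `H` already has a solution in `H`. -/
def IsExtClosed (H : Type*) [HeytingAlgebra H] : Prop :=
  ∀ (K : Type*) [HeytingAlgebra K] (f : HeytingHom H K), Function.Injective f →
    ∀ {l m κ : ℕ} (t : HeytingTerm (l + m)) (s : Fin κ → HeytingTerm (l + m)) (a : Fin l → H),
      HasSolution t s (fun i => f (a i)) → HasSolution t s a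

/-- A Heyting subalgebra: a subset containing `⊥`, `⊤` and closed under `⊓`, `⊔`, `⇨`. -/
structure HeytingSubalgebra (H : Type*) [HeytingAlgebra H] where
  carrier : Set H
  bot_mem : ⊥ ∈ carrier
  top_mem : ⊤ ∈ carrier
  inf_mem : ∀ {a b : H}, a ∈ carrier → b ∈ carrier → a ⊓ b ∈ carrier
  sup_mem : ∀ {a b : H}, a ∈ carrier → b ∈ carrier → a ⊔ b ∈ carrier
  himp_mem : ∀ {a b : H}, a ∈ carrier → b ∈ carrier → a ⇨ b ∈ carrier

/-- A Heyting algebra is locally finite if every finite subset is contained in a finite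
subalgebra. -/
def LocallyFiniteHA (H : Type*) [HeytingAlgebra H] : Prop :=
  ∀ s : Finset H, ∃ S : HeytingSubalgebra H, S.carrier.Finite ∧ ↑s ⊆ S.carrier


/-!
Back and forth. Let `φ` be an isomorphism between finite subalgebras of `H₁` and `H₂`, and
`D ⊇ dom φ` a finite subalgebra of `H₁` (local finiteness). Amalgamate `H₂` and `D` over
`dom φ`: the amalgam is the algebra of up-sets of pairs of prime filters of `H₂` and `D` with
the same restriction to `dom φ`, and since `dom φ` is finite, every prime filter of it extends
along both embeddings, so that `H₂` and `D` embed into the amalgam compatibly. The diagram of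
`D`, together with the equations tying it to `φ` and the inequations expressing injectivity, is
a finite system with parameters in `H₂` that is solved in the amalgam by `D` itself; by
existential closedness it is solved in `H₂`, i.e. `φ` extends to `D`. Starting from `{⊥, ⊤}`
and alternating extensions along enumerations of the two countable algebras gives the
isomorphism.
-/

universe u v w

open Function

theorem Fin.comp_append {l m : ℕ} {α β : Type*} (g : α → β) (a : Fin l → α) (b : Fin m → α) :
    g ∘ Fin.append a b = Fin.append (g ∘ a) (g ∘ b) := by
  funext k
  refine Fin.addCases (fun k => ?_) (fun k => ?_) k <;> simp

namespace HeytingTerm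

variable {n : ℕ} {H K : Type*} [HeytingAlgebra H] [HeytingAlgebra K]

theorem eval_map (g : HeytingHom H K) (v : Fin n → H) :
    ∀ t : HeytingTerm n, t.eval (g ∘ v) = g (t.eval v)
  | var _ => rfl
  | bot => (map_bot g).symm
  | top => (map_top g).symm
  | inf a b => by simp only [eval, map_inf, eval_map g v a, eval_map g v b]
  | sup a b => by simp only [eval, map_sup, eval_map g v a, eval_map g v b]
  | himp a b => by simp only [eval, map_himp, eval_map g v a, eval_map g v b]

def bihimp (u v : HeytingTerm n) : HeytingTerm n := .inf (.himp v u) (.himp u v)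

@[simp] theorem eval_bihimp (u v : HeytingTerm n) (w : Fin n → H) :
    (bihimp u v).eval w = _root_.bihimp (u.eval w) (v.eval w) := rfl

def conj : List (HeytingTerm n) → HeytingTerm n
  | [] => .top
  | u :: L => .inf u (conj L)

theorem eval_conj_eq_top_iff {w : Fin n → H} :
    ∀ {L : List (HeytingTerm n)}, (conj L).eval w = ⊤ ↔ ∀ u ∈ L, u.eval w = ⊤
  | [] => by simp [conj, eval]
  | u :: L => by simp [conj, eval, eval_conj_eq_top_iff (L := L)]

end HeytingTerm

section Solutions

variable {l m κ : ℕ} {t : HeytingTerm (l + m)} {s : Fin κ → HeytingTerm (l + m)}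

theorem IsSolution.map_iff {H K : Type*} [HeytingAlgebra H] [HeytingAlgebra K]
    (g : HeytingHom H K) (hg : Injective g) {a : Fin l → H} {b : Fin m → H} :
    IsSolution t s (g ∘ a) (g ∘ b) ↔ IsSolution t s a b := by
  have eval_eq_top (u : HeytingTerm (l + m)) :
      u.eval (Fin.append (g ∘ a) (g ∘ b)) = ⊤ ↔ u.eval (Fin.append a b) = ⊤ := by
    rw [← Fin.comp_append, HeytingTerm.eval_map, ← map_top g, hg.eq_iff]
  simp only [IsSolution, ne_eq, eval_eq_top]

/-- `IsExtClosed` only quantifies over extensions in one universe; a small extension can be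
moved there through `Shrink`. -/
theorem IsExtClosed.hasSolution_of_small {H : Type u} [HeytingAlgebra H]
    (hec : IsExtClosed.{u, w} H) {K : Type v} [HeytingAlgebra K] [Small.{w} K]
    (f : HeytingHom H K) (hf : Injective f) {a : Fin l → H}
    (h : HasSolution t s (f ∘ a)) : HasSolution t s a := by
  let e := equivShrink.{w} K
  let _ : HeytingAlgebra (Shrink.{w} K) := e.symm.heytingAlgebra
  let g : HeytingHom K (Shrink.{w} K) :=
    { toFun := e
      map_sup' := fun x y => by
        change e (x ⊔ y) = e (e.symm (e x) ⊔ e.symm (e y)); simp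
      map_inf' := fun x y => by
        change e (x ⊓ y) = e (e.symm (e x) ⊓ e.symm (e y)); simp
      map_bot' := rfl
      map_himp' := fun x y => by
        change e (x ⇨ y) = e (e.symm (e x) ⇨ e.symm (e y)); simp }
  obtain ⟨b, hb⟩ := h
  exact hec _ (g.comp f) (e.injective.comp hf) t s a
    ⟨g ∘ b, (IsSolution.map_iff g e.injective).2 hb⟩

end Solutions

namespace HeytingSubalgebra

variable {H : Type*} [HeytingAlgebra H]

instance : SetLike (HeytingSubalgebra H) H where
  coe := carrier
  coe_injective S T h := by cases S; cases T; congr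

instance : PartialOrder (HeytingSubalgebra H) := .ofSetLike (HeytingSubalgebra H) H

@[simp] theorem mem_carrier {S : HeytingSubalgebra H} {x : H} : x ∈ S.carrier ↔ x ∈ S := Iff.rfl

variable (S : HeytingSubalgebra H)

instance : Min S := ⟨fun x y => ⟨x ⊓ y, S.inf_mem x.2 y.2⟩⟩
instance : Max S := ⟨fun x y => ⟨x ⊔ y, S.sup_mem x.2 y.2⟩⟩
instance : Top S := ⟨⟨⊤, S.top_mem⟩⟩
instance : Bot S := ⟨⟨⊥, S.bot_mem⟩⟩
instance : HImp S := ⟨fun x y => ⟨x ⇨ y, S.himp_mem x.2 y.2⟩⟩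
instance : Compl S := ⟨fun x => ⟨x ⇨ ⊥, S.himp_mem x.2 S.bot_mem⟩⟩

instance : HeytingAlgebra S :=
  Subtype.val_injective.heytingAlgebra _ Iff.rfl Iff.rfl (fun _ _ => rfl) (fun _ _ => rfl) rfl rfl
    (fun a => himp_bot a.1) (fun _ _ => rfl)

variable {S} {T : HeytingSubalgebra H}

def inclusion (h : S ≤ T) : HeytingHom S T where
  toFun x := ⟨x, h x.2⟩
  map_sup' _ _ := rfl
  map_inf' _ _ := rfl
  map_bot' := rfl
  map_himp' _ _ := rfl

theorem inclusion_injective (h : S ≤ T) : Injective (inclusion h) :=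
  fun _ _ hxy => Subtype.ext (congrArg Subtype.val hxy :)

end HeytingSubalgebra

theorem HeytingHom.injective_iff_map_eq_top {α β : Type*} [HeytingAlgebra α] [HeytingAlgebra β]
    (f : HeytingHom α β) : Injective f ↔ ∀ a, f a = ⊤ → a = ⊤ := by
  refine ⟨fun hf a ha => hf (ha.trans (map_top f).symm), fun h a b hab => ?_⟩
  exact bihimp_eq_top.1 (h _ (by rw [map_bihimp, hab, bihimp_self]))

namespace EmbeddingSystem

variable (A C : Type*) [Finite A] [HeytingAlgebra C] [Finite C]

noncomputable abbrev arity : ℕ := Nat.card A + Nat.card C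

variable {A C}

noncomputable def param (a : A) : HeytingTerm (arity A C) :=
  .var (Fin.castAdd _ (Finite.equivFin A a))

noncomputable def unknown (c : C) : HeytingTerm (arity A C) :=
  .var (Fin.natAdd _ (Finite.equivFin C c))

/-- A solution is a Heyting homomorphism `c ↦ unknown c` sending `j a` to `param a`; it
preserves `⊤ = ⊥ ⇨ ⊥` without a further equation. -/
noncomputable def equations (j : A → C) : HeytingTerm (arity A C) :=
  let _ := Fintype.ofFinite A
  let _ := Fintype.ofFinite C
  let elems := (Finset.univ : Finset C).toList
  .conj <| (elems.flatMap fun x => elems.flatMap fun y =>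
    [.bihimp (unknown (x ⊓ y)) (.inf (unknown x) (unknown y)),
     .bihimp (unknown (x ⊔ y)) (.sup (unknown x) (unknown y)),
     .bihimp (unknown (x ⇨ y)) (.himp (unknown x) (unknown y))]) ++
    .bihimp (unknown ⊥) .bot ::
      (Finset.univ : Finset A).toList.map fun a => .bihimp (param a) (unknown (j a))

variable (A C) in
noncomputable def inequations : Fin (Nat.card {c : C // c ≠ ⊤}) → HeytingTerm (arity A C) :=
  fun k => unknown ((Finite.equivFin {c : C // c ≠ ⊤}).symm k).1

theorem hasSolution_iff {Z : Type*} [HeytingAlgebra Z] (j : A → C) (i : A → Z) :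
    HasSolution (equations j) (inequations A C) (i ∘ (Finite.equivFin A).symm) ↔
      ∃ g : HeytingHom C Z, Injective g ∧ ∀ a, g (j a) = i a := by
  set eC := Finite.equivFin C with heC
  have eval_equations (b : Fin (Nat.card C) → Z) :
      (equations j).eval (Fin.append (i ∘ (Finite.equivFin A).symm) b) = ⊤ ↔
        (∀ x y, b (eC (x ⊓ y)) = b (eC x) ⊓ b (eC y) ∧ b (eC (x ⊔ y)) = b (eC x) ⊔ b (eC y) ∧
          b (eC (x ⇨ y)) = b (eC x) ⇨ b (eC y)) ∧ b (eC ⊥) = ⊥ ∧ ∀ a, i a = b (eC (j a)) := by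
    simp only [equations, HeytingTerm.eval_conj_eq_top_iff, List.forall_mem_append,
      List.forall_mem_flatMap, List.forall_mem_cons, List.forall_mem_map, Finset.mem_toList,
      Finset.mem_univ, forall_const, List.not_mem_nil, IsEmpty.forall_iff, implies_true, and_true,
      HeytingTerm.eval_bihimp, HeytingTerm.eval, bihimp_eq_top, unknown, param,
      Fin.append_left, Fin.append_right, comp_apply, Equiv.symm_apply_apply, ← heC]
  have eval_inequations (b : Fin (Nat.card C) → Z) :
      (∀ k, (inequations A C k).eval (Fin.append (i ∘ (Finite.equivFin A).symm) b) ≠ ⊤) ↔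
        ∀ c, b (eC c) = ⊤ → c = ⊤ := by
    simp only [inequations, unknown, HeytingTerm.eval, Fin.append_right, ← heC]
    refine ⟨fun h c hc => by_contra fun hc' => h (Finite.equivFin _ ⟨c, hc'⟩) (by simpa), ?_⟩
    exact fun h k hk => ((Finite.equivFin _).symm k).2 (h _ hk)
  constructor
  · rintro ⟨b, ht, hs⟩
    obtain ⟨hops, hbot, hpar⟩ := (eval_equations b).1 ht
    let g : HeytingHom C Z :=
      { toFun := b ∘ eC
        map_sup' x y := (hops x y).2.1
        map_inf' x y := (hops x y).1
        map_bot' := hbot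
        map_himp' x y := (hops x y).2.2 }
    exact ⟨g, g.injective_iff_map_eq_top.2 ((eval_inequations b).1 hs), fun a => (hpar a).symm⟩
  · rintro ⟨g, hg, hgj⟩
    refine ⟨g ∘ eC.symm, (eval_equations _).2 ⟨fun x y => ?_, ?_, fun a => ?_⟩,
      (eval_inequations _).2 ?_⟩
    · simp
    · simp
    · simp [hgj]
    · simpa using g.injective_iff_map_eq_top.1 hg

end EmbeddingSystem

structure PrimeFilter (H : Type*) [DistribLattice H] [BoundedOrder H] where
  carrier : Set H
  top_mem : ⊤ ∈ carrier
  bot_notMem : ⊥ ∉ carrier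
  mem_of_le : ∀ {x y : H}, x ∈ carrier → x ≤ y → y ∈ carrier
  inf_mem : ∀ {x y : H}, x ∈ carrier → y ∈ carrier → x ⊓ y ∈ carrier
  mem_or_mem : ∀ {x y : H}, x ⊔ y ∈ carrier → x ∈ carrier ∨ y ∈ carrier

namespace PrimeFilter

section DistribLattice

variable {H : Type*} [DistribLattice H] [BoundedOrder H]

instance : SetLike (PrimeFilter H) H where
  coe := carrier
  coe_injective P Q h := by cases P; cases Q; congr

instance : PartialOrder (PrimeFilter H) := .ofSetLike (PrimeFilter H) H

@[simp] theorem mem_carrier {P : PrimeFilter H} {x : H} : x ∈ P.carrier ↔ x ∈ P := Iff.rfl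

@[ext] theorem ext {P Q : PrimeFilter H} (h : ∀ x, x ∈ P ↔ x ∈ Q) : P = Q := SetLike.ext h

theorem sup_mem_iff (P : PrimeFilter H) {x y : H} : x ⊔ y ∈ P ↔ x ∈ P ∨ y ∈ P :=
  ⟨P.mem_or_mem, fun h => h.elim (P.mem_of_le · le_sup_left) (P.mem_of_le · le_sup_right)⟩

theorem inf_mem_iff (P : PrimeFilter H) {x y : H} : x ⊓ y ∈ P ↔ x ∈ P ∧ y ∈ P :=
  ⟨fun h => ⟨P.mem_of_le h inf_le_left, P.mem_of_le h inf_le_right⟩, fun h => P.inf_mem h.1 h.2⟩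

theorem exists_le_of_notMem (F : Order.PFilter H) {c : H} (hc : c ∉ F) :
    ∃ P : PrimeFilter H, (F : Set H) ⊆ P ∧ c ∉ P := by
  have hdisj : Disjoint (F : Set H) (Order.Ideal.principal c : Set H) :=
    Set.disjoint_left.2 fun x hxF hxc => hc (F.mem_of_le hxc hxF)
  obtain ⟨J, hJ, hcJ, hFJ⟩ := DistribLattice.prime_ideal_of_disjoint_filter_ideal hdisj
  refine ⟨⟨(J : Set H)ᶜ, hJ.toIsProper.top_notMem, fun h => h J.bot_mem,
    fun hx hxy hy => hx (J.lower hxy hy), fun hx hy hxy => (hJ.mem_or_mem hxy).elim hx hy,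
    fun hxy => ?_⟩, fun x hx => Set.disjoint_left.1 hFJ hx, fun h => h (hcJ le_rfl)⟩
  by_contra! h
  exact hxy (J.sup_mem (not_not.1 h.1) (not_not.1 h.2))

theorem exists_mem_notMem {b c : H} (h : ¬b ≤ c) : ∃ P : PrimeFilter H, b ∈ P ∧ c ∉ P :=
  (exists_le_of_notMem (Order.PFilter.principal b) h).imp fun _ hP => ⟨hP.1 le_rfl, hP.2⟩

variable {A F : Type*} [DistribLattice A] [BoundedOrder A] [FunLike F A H]
  [BoundedLatticeHomClass F A H]

def comap (f : F) (P : PrimeFilter H) : PrimeFilter A where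
  carrier := f ⁻¹' P
  top_mem := by simpa using P.top_mem
  bot_notMem := by simpa using P.bot_notMem
  mem_of_le hx hxy := P.mem_of_le hx (OrderHomClass.mono f hxy)
  inf_mem hx hy := by simpa [P.inf_mem_iff] using And.intro hx hy
  mem_or_mem h := by simpa [P.sup_mem_iff] using h

@[simp] theorem mem_comap {f : F} {P : PrimeFilter H} {a : A} : a ∈ P.comap f ↔ f a ∈ P :=
  Iff.rfl

theorem comap_mono (f : F) {P Q : PrimeFilter H} (h : P ≤ Q) : P.comap f ≤ Q.comap f :=
  fun _ ha => h ha

section Finite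

variable [Finite A] (P : PrimeFilter A)

/-- In a finite lattice a prime filter is the principal filter of `least`, and its complement
the principal ideal of `greatestNonMem`. -/
noncomputable def least : A := (P : Set A).toFinite.toFinset.inf id

noncomputable def greatestNonMem : A := (P : Set A)ᶜ.toFinite.toFinset.sup id

theorem least_mem : P.least ∈ P :=
  Finset.inf_mem _ P.top_mem (fun _ hx _ hy => P.inf_mem hx hy) _ _ (by simp)

theorem least_le {x : A} (hx : x ∈ P) : P.least ≤ x :=
  Finset.inf_le (f := id) (by simpa using hx)

theorem greatestNonMem_notMem : P.greatestNonMem ∉ P :=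
  Finset.sup_mem (P : Set A)ᶜ P.bot_notMem
    (fun _ hx _ hy hxy => (P.mem_or_mem hxy).elim hx hy) _ _ (by simp)

theorem le_greatestNonMem {x : A} (hx : x ∉ P) : x ≤ P.greatestNonMem :=
  Finset.le_sup (f := id) (by simpa using hx)

theorem comap_eq_of_mem_of_notMem (f : F) {G : PrimeFilter H} (h₁ : f P.least ∈ G)
    (h₂ : f P.greatestNonMem ∉ G) : G.comap f = P := by
  ext x
  refine ⟨fun hx => ?_, fun hx => G.mem_of_le h₁ (OrderHomClass.mono f (P.least_le hx))⟩
  by_contra hxP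
  exact h₂ (G.mem_of_le hx (OrderHomClass.mono f (P.le_greatestNonMem hxP)))

theorem exists_comap_eq {f : F} (hf : Injective f) : ∃ G : PrimeFilter H, G.comap f = P := by
  have hle : ¬f P.least ≤ f P.greatestNonMem := fun hle =>
    P.greatestNonMem_notMem (P.mem_of_le P.least_mem
      (inf_eq_left.1 (hf (by rw [map_inf, inf_eq_left.2 hle]))))
  obtain ⟨G, h₁, h₂⟩ := exists_mem_notMem hle
  exact ⟨G, P.comap_eq_of_mem_of_notMem f h₁ h₂⟩

end Finite

end DistribLattice

section HeytingAlgebra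

variable {H : Type*} [HeytingAlgebra H]

theorem exists_le_mem_notMem (G : PrimeFilter H) {b c : H} (h : b ⇨ c ∉ G) :
    ∃ G' : PrimeFilter H, G ≤ G' ∧ b ∈ G' ∧ c ∉ G' := by
  -- the filter generated by `G ∪ {b}`
  have hF : Order.IsPFilter {x | b ⇨ x ∈ G} :=
    .of_def ⟨b, by simpa using G.top_mem⟩
      (fun x hx y hy => ⟨x ⊓ y, by simpa [himp_inf_distrib] using G.inf_mem hx hy,
        inf_le_left, inf_le_right⟩)
      (fun hxy hx => G.mem_of_le hx (himp_le_himp_left hxy))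
  obtain ⟨G', hGG', hc⟩ := exists_le_of_notMem hF.toPFilter h
  exact ⟨G', fun g hg => hGG' (G.mem_of_le hg le_himp),
    hGG' (show b ⇨ b ∈ G by simpa using G.top_mem), hc⟩

variable {A : Type*} [HeytingAlgebra A] [Finite A]

theorem exists_le_comap_eq (f : HeytingHom A H) (G : PrimeFilter H) (P : PrimeFilter A)
    (h : G.comap f ≤ P) : ∃ G' : PrimeFilter H, G ≤ G' ∧ G'.comap f = P := by
  have hG : f P.least ⇨ f P.greatestNonMem ∉ G := fun hmem =>
    P.greatestNonMem_notMem (P.mem_of_le (P.inf_mem (h (by simpa using hmem)) P.least_mem)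
      himp_inf_le)
  obtain ⟨G', hGG', h₁, h₂⟩ := G.exists_le_mem_notMem hG
  exact ⟨G', hGG', P.comap_eq_of_mem_of_notMem f h₁ h₂⟩

end HeytingAlgebra

end PrimeFilter

theorem LowerSet.mem_himp_iff {X : Type*} [Preorder X] {U V : LowerSet X} {p : X} :
    p ∈ U ⇨ V ↔ ∀ q ≤ p, q ∈ U → q ∈ V := by
  rw [← LowerSet.Iic_le, le_himp_iff]
  exact ⟨fun h q hqp hq => h ⟨hqp, hq⟩, fun h q hq => h q hq.1 hq.2⟩

namespace PrimeFilter

variable {B X : Type*} [HeytingAlgebra B] [Preorder X] (π : X → PrimeFilter B)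
  (anti : Antitone π) (lift : ∀ p F, π p ≤ F → ∃ q ≤ p, π q = F)

/-- The lifting property of `π` (a p-morphism condition) is what makes this preserve `⇨`. -/
def toLowerSetHom : HeytingHom B (LowerSet X) where
  toFun b := ⟨{p | b ∈ π p}, fun _ _ hqp hp => anti hqp hp⟩
  map_sup' _ _ := SetLike.ext fun p => (π p).sup_mem_iff
  map_inf' _ _ := SetLike.ext fun p => (π p).inf_mem_iff
  map_bot' := SetLike.ext fun p => iff_of_false (π p).bot_notMem id
  map_himp' b b' := by
    ext p
    change b ⇨ b' ∈ π p ↔ p ∈ (⟨{p | b ∈ π p}, _⟩ ⇨ ⟨{p | b' ∈ π p}, _⟩ : LowerSet X)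
    rw [LowerSet.mem_himp_iff]
    refine ⟨fun h q hqp hb => (π q).mem_of_le ((π q).inf_mem (anti hqp h) hb) himp_inf_le,
      fun h => by_contra fun hp => ?_⟩
    obtain ⟨F, hpF, hbF, hb'F⟩ := (π p).exists_le_mem_notMem hp
    obtain ⟨q, hqp, rfl⟩ := lift p F hpF
    exact hb'F (h q hqp hbF)

theorem toLowerSetHom_injective (hπ : Surjective π) : Injective (toLowerSetHom π anti lift) := by
  have le_of_le {b b' : B} (h : toLowerSetHom π anti lift b ≤ toLowerSetHom π anti lift b') :
      b ≤ b' := by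
    by_contra hbb'
    obtain ⟨F, hb, hb'⟩ := exists_mem_notMem hbb'
    obtain ⟨p, rfl⟩ := hπ F
    exact hb' (h hb)
  exact fun b b' h => le_antisymm (le_of_le h.le) (le_of_le h.ge)

end PrimeFilter

section

variable {A B C : Type*} [HeytingAlgebra A] [HeytingAlgebra B] [HeytingAlgebra C]
  (i : HeytingHom A B) (j : HeytingHom A C)

def AmalgamPoint : Type _ :=
  {p : PrimeFilter B × PrimeFilter C // p.1.comap i = p.2.comap j}

/-- Reverse inclusion, so that the up-sets for inclusion, which form the amalgam, are the lower
sets. -/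
instance : Preorder (AmalgamPoint i j) := Preorder.lift fun p => OrderDual.toDual p.1

abbrev Amalgam : Type _ := LowerSet (AmalgamPoint i j)

namespace Amalgam

instance [Countable B] [Countable C] : Small.{w} (Amalgam i j) :=
  have : Small.{w} (AmalgamPoint i j) :=
    small_of_injective (f := fun p : AmalgamPoint i j => ((p.1.1 : Set B), (p.1.2 : Set C)))
      fun _ _ h => Subtype.ext (Prod.ext (SetLike.coe_injective (Prod.ext_iff.1 h).1)
        (SetLike.coe_injective (Prod.ext_iff.1 h).2))
  small_of_injective (f := fun U : Amalgam i j => (U : Set (AmalgamPoint i j)))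
    SetLike.coe_injective

variable [Finite A]

def inl : HeytingHom B (Amalgam i j) :=
  PrimeFilter.toLowerSetHom (fun p : AmalgamPoint i j => p.1.1) (fun _ _ h => h.1)
    fun p F hF => by
      obtain ⟨G, hG, hGF⟩ :=
        PrimeFilter.exists_le_comap_eq j p.1.2 (F.comap i) (p.2 ▸ PrimeFilter.comap_mono i hF)
      exact ⟨⟨(F, G), hGF.symm⟩, ⟨hF, hG⟩, rfl⟩

def inr : HeytingHom C (Amalgam i j) :=
  PrimeFilter.toLowerSetHom (fun p : AmalgamPoint i j => p.1.2) (fun _ _ h => h.2)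
    fun p G hG => by
      obtain ⟨F, hF, hFG⟩ :=
        PrimeFilter.exists_le_comap_eq i p.1.1 (G.comap j) (p.2.symm ▸ PrimeFilter.comap_mono j hG)
      exact ⟨⟨(F, G), hFG⟩, ⟨hF, hG⟩, rfl⟩

theorem inl_injective (hj : Injective j) : Injective (inl i j) :=
  PrimeFilter.toLowerSetHom_injective _ _ _ fun F =>
    have ⟨G, hG⟩ := (F.comap i).exists_comap_eq hj
    ⟨⟨(F, G), hG.symm⟩, rfl⟩

theorem inr_injective (hi : Injective i) : Injective (inr i j) :=
  PrimeFilter.toLowerSetHom_injective _ _ _ fun G =>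
    have ⟨F, hF⟩ := (G.comap j).exists_comap_eq hi
    ⟨⟨(F, G), hF⟩, rfl⟩

theorem inl_comp_eq_inr_comp : (inl i j).comp i = (inr i j).comp j :=
  HeytingHom.ext fun a => SetLike.ext fun p => SetLike.ext_iff.1 p.2 a

end Amalgam

end

theorem IsExtClosed.exists_injective_extension {X : Type*} [HeytingAlgebra X] [Countable X]
    (hec : IsExtClosed X) {A C : Type*} [HeytingAlgebra A] [Finite A] [HeytingAlgebra C]
    [Finite C] (i : HeytingHom A X) (hi : Injective i) (j : HeytingHom A C) (hj : Injective j) :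
    ∃ g : HeytingHom C X, Injective g ∧ g.comp j = i := by
  have hK := (EmbeddingSystem.hasSolution_iff j (Amalgam.inl i j ∘ i)).2
    ⟨Amalgam.inr i j, Amalgam.inr_injective i j hi,
      fun a => (DFunLike.congr_fun (Amalgam.inl_comp_eq_inr_comp i j) a).symm⟩
  obtain ⟨g, hg, hgj⟩ := (EmbeddingSystem.hasSolution_iff j i).1
    (hec.hasSolution_of_small (Amalgam.inl i j) (Amalgam.inl_injective i j hj) hK)
  exact ⟨g, hg, HeytingHom.ext hgj⟩

/-- The values of `toFun` outside `dom` play no role. -/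
structure PartialIso (X Y : Type*) [HeytingAlgebra X] [HeytingAlgebra Y] where
  dom : HeytingSubalgebra X
  finite_dom : (dom : Set X).Finite
  toFun : X → Y
  injOn : Set.InjOn toFun dom
  map_bot' : toFun ⊥ = ⊥
  map_top' : toFun ⊤ = ⊤
  map_inf' : ∀ {x y : X}, x ∈ dom → y ∈ dom → toFun (x ⊓ y) = toFun x ⊓ toFun y
  map_sup' : ∀ {x y : X}, x ∈ dom → y ∈ dom → toFun (x ⊔ y) = toFun x ⊔ toFun y
  map_himp' : ∀ {x y : X}, x ∈ dom → y ∈ dom → toFun (x ⇨ y) = toFun x ⇨ toFun y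

namespace PartialIso

open HeytingSubalgebra

variable {X Y : Type*} [HeytingAlgebra X] [HeytingAlgebra Y]

instance : Preorder (PartialIso X Y) where
  le φ ψ := φ.dom ≤ ψ.dom ∧ Set.EqOn φ.toFun ψ.toFun φ.dom
  le_refl φ := ⟨le_rfl, Set.eqOn_refl _ _⟩
  le_trans _ _ _ h₁ h₂ := ⟨h₁.1.trans h₂.1, h₁.2.trans (h₂.2.mono h₁.1)⟩

def toHom (φ : PartialIso X Y) : HeytingHom φ.dom Y where
  toFun x := φ.toFun x
  map_sup' x y := φ.map_sup' x.2 y.2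
  map_inf' x y := φ.map_inf' x.2 y.2
  map_bot' := φ.map_bot'
  map_himp' x y := φ.map_himp' x.2 y.2

theorem toHom_injective (φ : PartialIso X Y) : Injective φ.toHom :=
  fun x y h => Subtype.ext (φ.injOn x.2 y.2 h)

open scoped Classical in
noncomputable def ofHom (S : HeytingSubalgebra X) (hS : (S : Set X).Finite) (g : HeytingHom S Y)
    (hg : Injective g) : PartialIso X Y where
  dom := S
  finite_dom := hS
  toFun x := if hx : x ∈ S then g ⟨x, hx⟩ else ⊥
  injOn x hx y hy h := by
    rw [SetLike.mem_coe] at hx hy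
    simpa only [dif_pos hx, dif_pos hy, hg.eq_iff, Subtype.mk.injEq] using h
  map_bot' := by rw [dif_pos (mem_carrier.1 S.bot_mem)]; exact map_bot g
  map_top' := by rw [dif_pos (mem_carrier.1 S.top_mem)]; exact map_top g
  map_inf' hx hy := by
    rw [dif_pos hx, dif_pos hy, dif_pos (mem_carrier.1 (S.inf_mem hx hy))]
    exact map_inf g (⟨_, hx⟩ : S) ⟨_, hy⟩
  map_sup' hx hy := by
    rw [dif_pos hx, dif_pos hy, dif_pos (mem_carrier.1 (S.sup_mem hx hy))]
    exact map_sup g (⟨_, hx⟩ : S) ⟨_, hy⟩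
  map_himp' hx hy := by
    rw [dif_pos hx, dif_pos hy, dif_pos (mem_carrier.1 (S.himp_mem hx hy))]
    exact map_himp g (⟨_, hx⟩ : S) ⟨_, hy⟩

variable (φ : PartialIso X Y)

def codom : HeytingSubalgebra Y where
  carrier := φ.toFun '' φ.dom
  bot_mem := ⟨⊥, φ.dom.bot_mem, φ.map_bot'⟩
  top_mem := ⟨⊤, φ.dom.top_mem, φ.map_top'⟩
  inf_mem := by
    rintro _ _ ⟨x, hx, rfl⟩ ⟨y, hy, rfl⟩
    exact ⟨x ⊓ y, φ.dom.inf_mem hx hy, φ.map_inf' hx hy⟩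
  sup_mem := by
    rintro _ _ ⟨x, hx, rfl⟩ ⟨y, hy, rfl⟩
    exact ⟨x ⊔ y, φ.dom.sup_mem hx hy, φ.map_sup' hx hy⟩
  himp_mem := by
    rintro _ _ ⟨x, hx, rfl⟩ ⟨y, hy, rfl⟩
    exact ⟨x ⇨ y, φ.dom.himp_mem hx hy, φ.map_himp' hx hy⟩

noncomputable def symm : PartialIso Y X where
  dom := φ.codom
  finite_dom := φ.finite_dom.image _
  toFun := invFunOn φ.toFun φ.dom
  injOn := by
    rintro _ ⟨x, hx, rfl⟩ _ ⟨y, hy, rfl⟩ h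
    rw [φ.injOn.leftInvOn_invFunOn hx, φ.injOn.leftInvOn_invFunOn hy] at h
    rw [h]
  map_bot' := by rw [← φ.map_bot', φ.injOn.leftInvOn_invFunOn φ.dom.bot_mem]
  map_top' := by rw [← φ.map_top', φ.injOn.leftInvOn_invFunOn φ.dom.top_mem]
  map_inf' := by
    rintro _ _ ⟨x, hx, rfl⟩ ⟨y, hy, rfl⟩
    rw [← φ.map_inf' hx hy, φ.injOn.leftInvOn_invFunOn hx, φ.injOn.leftInvOn_invFunOn hy,
      φ.injOn.leftInvOn_invFunOn (φ.dom.inf_mem hx hy)]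
  map_sup' := by
    rintro _ _ ⟨x, hx, rfl⟩ ⟨y, hy, rfl⟩
    rw [← φ.map_sup' hx hy, φ.injOn.leftInvOn_invFunOn hx, φ.injOn.leftInvOn_invFunOn hy,
      φ.injOn.leftInvOn_invFunOn (φ.dom.sup_mem hx hy)]
  map_himp' := by
    rintro _ _ ⟨x, hx, rfl⟩ ⟨y, hy, rfl⟩
    rw [← φ.map_himp' hx hy, φ.injOn.leftInvOn_invFunOn hx, φ.injOn.leftInvOn_invFunOn hy,
      φ.injOn.leftInvOn_invFunOn (φ.dom.himp_mem hx hy)]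

theorem symm_toFun_apply {x : X} (hx : x ∈ φ.dom) : φ.symm.toFun (φ.toFun x) = x :=
  φ.injOn.leftInvOn_invFunOn hx

theorem mem_codom_symm {x : X} (hx : x ∈ φ.dom) : x ∈ φ.symm.codom :=
  ⟨φ.toFun x, ⟨x, hx, rfl⟩, φ.symm_toFun_apply hx⟩

theorem le_symm_of_symm_le {ψ : PartialIso Y X} (h : φ.symm ≤ ψ) : φ ≤ ψ.symm := by
  have hψ {x : X} (hx : x ∈ φ.dom) : ψ.toFun (φ.toFun x) = x :=
    (h.2 ⟨x, hx, rfl⟩).symm.trans (φ.symm_toFun_apply hx)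
  refine ⟨fun x hx => ⟨φ.toFun x, h.1 ⟨x, hx, rfl⟩, hψ hx⟩, fun x hx => ?_⟩
  rw [← ψ.symm_toFun_apply (h.1 ⟨x, hx, rfl⟩), hψ hx]

end PartialIso

namespace PartialIso

variable {X Y : Type*} [HeytingAlgebra X] [HeytingAlgebra Y]

theorem exists_le_mem_dom (hlf : LocallyFiniteHA X) [Countable Y] (hec : IsExtClosed Y)
    (φ : PartialIso X Y) (x : X) : ∃ ψ : PartialIso X Y, φ ≤ ψ ∧ x ∈ ψ.dom := by
  classical
  obtain ⟨D, hD, hxD⟩ := hlf (insert x φ.finite_dom.toFinset)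
  have hle : φ.dom ≤ D := fun z hz => hxD (by simpa using Or.inr hz)
  have := φ.finite_dom.to_subtype
  have := hD.to_subtype
  obtain ⟨g, hg, hgφ⟩ := hec.exists_injective_extension φ.toHom φ.toHom_injective
    (HeytingSubalgebra.inclusion hle) (HeytingSubalgebra.inclusion_injective hle)
  refine ⟨ofHom D hD g hg, ⟨hle, fun z hz => ?_⟩, hxD (by simp)⟩
  simp only [ofHom, dif_pos (hle hz)]
  exact (DFunLike.congr_fun hgφ ⟨z, hz⟩).symm

theorem exists_le_mem_codom (hlf : LocallyFiniteHA Y) [Countable X] (hec : IsExtClosed X)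
    (φ : PartialIso X Y) (y : Y) : ∃ ψ : PartialIso X Y, φ ≤ ψ ∧ y ∈ ψ.codom :=
  have ⟨χ, hφχ, hy⟩ := φ.symm.exists_le_mem_dom hlf hec y
  ⟨χ.symm, φ.le_symm_of_symm_le hφχ, χ.mem_codom_symm hy⟩

open scoped Classical in
noncomputable def botTop (h₁ : (⊥ : X) ≠ ⊤) (h₂ : (⊥ : Y) ≠ ⊤) : PartialIso X Y where
  dom :=
    { carrier := {⊥, ⊤}
      bot_mem := Or.inl rfl
      top_mem := Or.inr rfl
      inf_mem := by rintro _ _ (rfl | rfl) (rfl | rfl) <;> simp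
      sup_mem := by rintro _ _ (rfl | rfl) (rfl | rfl) <;> simp
      himp_mem := by rintro _ _ (rfl | rfl) (rfl | rfl) <;> simp }
  finite_dom := (Set.finite_singleton ⊤).insert ⊥
  toFun x := if x = ⊤ then ⊤ else ⊥
  injOn := by rintro _ (rfl | rfl) _ (rfl | rfl) h <;> simp_all [eq_comm]
  map_bot' := by simp [h₁]
  map_top' := by simp
  map_inf' := by rintro _ _ (rfl | rfl) (rfl | rfl) <;> simp [h₁]
  map_sup' := by rintro _ _ (rfl | rfl) (rfl | rfl) <;> simp [h₁]
  map_himp' := by rintro _ _ (rfl | rfl) (rfl | rfl) <;> simp [h₁]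

theorem exists_bijective_of_directedOn {I : Set (PartialIso X Y)} (hI : DirectedOn (· ≤ ·) I)
    (hdom : ∀ x, ∃ φ ∈ I, x ∈ φ.dom) (hcodom : ∀ y, ∃ φ ∈ I, y ∈ φ.codom) :
    ∃ f : HeytingHom X Y, Bijective f := by
  choose φ hφI hxφ using hdom
  have eq_of_mem {ψ : PartialIso X Y} (hψ : ψ ∈ I) {x : X} (hx : x ∈ ψ.dom) :
      (φ x).toFun x = ψ.toFun x := by
    obtain ⟨χ, -, hφχ, hψχ⟩ := hI _ (hφI x) _ hψ
    exact (hφχ.2 (hxφ x)).trans (hψχ.2 hx).symm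
  have common (x y : X) : ∃ ψ ∈ I, x ∈ ψ.dom ∧ y ∈ ψ.dom := by
    obtain ⟨ψ, hψ, hxψ, hyψ⟩ := hI _ (hφI x) _ (hφI y)
    exact ⟨ψ, hψ, hxψ.1 (hxφ x), hyψ.1 (hxφ y)⟩
  let f : HeytingHom X Y :=
    { toFun x := (φ x).toFun x
      map_sup' x y := by
        obtain ⟨ψ, hψ, hx, hy⟩ := common x y
        simp only [eq_of_mem hψ hx, eq_of_mem hψ hy, eq_of_mem hψ (ψ.dom.sup_mem hx hy),
          ψ.map_sup' hx hy]
      map_inf' x y := by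
        obtain ⟨ψ, hψ, hx, hy⟩ := common x y
        simp only [eq_of_mem hψ hx, eq_of_mem hψ hy, eq_of_mem hψ (ψ.dom.inf_mem hx hy),
          ψ.map_inf' hx hy]
      map_bot' := (φ ⊥).map_bot'
      map_himp' x y := by
        obtain ⟨ψ, hψ, hx, hy⟩ := common x y
        simp only [eq_of_mem hψ hx, eq_of_mem hψ hy, eq_of_mem hψ (ψ.dom.himp_mem hx hy),
          ψ.map_himp' hx hy] }
  refine ⟨f, fun x y hxy => ?_, fun y => ?_⟩
  · obtain ⟨ψ, hψ, hx, hy⟩ := common x y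
    exact ψ.injOn hx hy ((eq_of_mem hψ hx).symm.trans (hxy.trans (eq_of_mem hψ hy)))
  · obtain ⟨ψ, hψ, x, hx, rfl⟩ := hcodom y
    exact ⟨x, eq_of_mem hψ hx⟩

end PartialIso

/-- Any two nontrivial countable locally finite existentially closed Heyting algebras
are isomorphic. -/
theorem nontrivial_countable_locallyFinite_extClosed_unique
    (H₁ H₂ : Type*) [HeytingAlgebra H₁] [HeytingAlgebra H₂] [Countable H₁] [Countable H₂]
    (h₁ : (⊥ : H₁) ≠ ⊤) (hlf₁ : LocallyFiniteHA H₁) (hec₁ : IsExtClosed H₁)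
    (h₂ : (⊥ : H₂) ≠ ⊤) (hlf₂ : LocallyFiniteHA H₂) (hec₂ : IsExtClosed H₂) :
    ∃ f : HeytingHom H₁ H₂, Function.Bijective f := by
  let _ := Encodable.ofCountable H₁
  let _ := Encodable.ofCountable H₂
  let cofinal : H₁ ⊕ H₂ → Order.Cofinal (PartialIso H₁ H₂) :=
    Sum.elim (fun x => ⟨{φ | x ∈ φ.dom}, fun φ => φ.exists_le_mem_dom hlf₁ hec₂ x |>.imp
        fun _ h => h.symm⟩)
      (fun y => ⟨{φ | y ∈ φ.codom}, fun φ => φ.exists_le_mem_codom hlf₂ hec₁ y |>.imp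
        fun _ h => h.symm⟩)
  let I := Order.idealOfCofinals (PartialIso.botTop h₁ h₂) cofinal
  exact PartialIso.exists_bijective_of_directedOn I.directed
    (fun x => (Order.cofinal_meets_idealOfCofinals _ cofinal (.inl x)).imp fun _ h => h.symm)
    (fun y => (Order.cofinal_meets_idealOfCofinals _ cofinal (.inr y)).imp fun _ h => h.symm)
end

section
/- For all l, d, n ∈ ℕ there exists an L_HA-sentence σ, which can be taken of the form ∀x̄ ∃ȳ θ with θ quantifier-free, such that for every Heyting algebra A: h_{l,d}(A) ≤ n if and only if A satisfies σ. -/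
/-- `a ≈ₙ a'`: the tuples satisfy the same equations `t = ⊤` for terms of degree `≤ n`. -/
def SimDeg {l : ℕ} {A : Type*} [HeytingAlgebra A] (n : ℕ) (a a' : Fin l → A) : Prop :=
  ∀ t : HeytingTerm l, t.degree ≤ n → (t.eval a = ⊤ ↔ t.eval a' = ⊤)

/-- `n` witnesses the `(l,d)`-index property for `A`: for all `a ≈ₙ a'` and every system
of degree `≤ d` in `l` parameters and one unknown, `S(a,q)` is solvable in `A` iff
`S(a',q)` is. -/
def IndexProp (A : Type*) [HeytingAlgebra A] (l d n : ℕ) : Prop :=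
  ∀ a a' : Fin l → A, SimDeg n a a' →
    ∀ (κ : ℕ) (t : HeytingTerm (l + 1)) (s : Fin κ → HeytingTerm (l + 1)),
      t.degree ≤ d → (∀ k, (s k).degree ≤ d) →
      (HasSolution t s a ↔ HasSolution t s a')

/-- The `(l,d)`-index `h_{l,d}(A) ∈ ℕ ∪ {∞}`: the least `n` satisfying `IndexProp A l d n`,
or `∞` if there is none. -/
noncomputable def hIndex (A : Type*) [HeytingAlgebra A] (l d : ℕ) : ℕ∞ :=
  sInf {x : ℕ∞ | ∃ n : ℕ, x = ↑n ∧ IndexProp A l d n}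

/-- The QE property: all the `(l,d)`-indices are finite. -/
def HasQEProp (A : Type*) [HeytingAlgebra A] : Prop :=
  ∀ l d : ℕ, hIndex A l d < ⊤

/-- The function symbols of the first-order language of Heyting algebras: two constants
(`⊥`, `⊤`) and three binary operations (`⊓`, `⊔`, `⇨`). -/
inductive LHAFunc : ℕ → Type
  | bot : LHAFunc 0
  | top : LHAFunc 0
  | inf : LHAFunc 2
  | sup : LHAFunc 2
  | himp : LHAFunc 2

/-- The first-order language of Heyting algebras. -/
def LHA : FirstOrder.Language := ⟨LHAFunc, fun _ => Empty⟩

/-- Every Heyting algebra is an `LHA`-structure, interpreting the symbols by the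
Heyting operations. -/
instance LHA.structure (H : Type*) [HeytingAlgebra H] : LHA.Structure H where
  funMap {_} f x :=
    match f with
    | .bot => ⊥
    | .top => ⊤
    | .inf => x 0 ⊓ x 1
    | .sup => x 0 ⊔ x 1
    | .himp => x 0 ⇨ x 1
  RelMap {_} r := Empty.elim r

/-- Existential closure of the last `b` bound variables of a bounded formula. -/
def exsN {L : FirstOrder.Language} {α : Type*} :
    ∀ {a b : ℕ}, L.BoundedFormula α (a + b) → L.BoundedFormula α a
  | _, 0, φ => φ
  | _, _ + 1, φ => exsN φ.ex

/-!
Terms of degree `≤ d` in `k` variables take only finitely many values up to equivalence, uniformly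
in the Heyting algebra: a term of degree `≤ d + 1` is a lattice polynomial in the variables and in
implications `r ⇨ r'` between representatives of degree `≤ d`, hence equivalent to a join of meets
of these finitely many generators. So `a ≈ₙ a'` is a finite conjunction of atomic conditions, and
only finitely many systems of degree `≤ d` have to be tested. As `≈ₙ` is symmetric, `h_{l,d}(A) ≤ n`
then says: for all `a, a'` and all `u_j`, there are `w_j` such that if `a ≈ₙ a'` and `u_j` solves
the `j`-th representative system `S_j(a, q)`, then `w_j` solves `S_j(a', q)`.
-/

theorem List.exists_sublist_forall_exists_and {α β : Type*} (R : α → β → Prop) {as : List α}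
    {bs : List β} (h : ∀ a ∈ as, ∃ b ∈ bs, R a b) :
    ∃ bs', List.Sublist bs' bs ∧ (∀ a ∈ as, ∃ b ∈ bs', R a b) ∧ ∀ b ∈ bs', ∃ a ∈ as, R a b := by
  classical
  refine ⟨bs.filter fun b => ∃ a ∈ as, R a b, List.filter_sublist, fun a ha => ?_,
    fun b hb => by simpa using (List.mem_filter.1 hb).2⟩
  obtain ⟨b, hb, hab⟩ := h a ha
  exact ⟨b, List.mem_filter.2 ⟨hb, by simpa using ⟨a, ha, hab⟩⟩, hab⟩

theorem Fin.forall_append_iff {α : Type*} {m n : ℕ} {P : (Fin (m + n) → α) → Prop} :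
    (∀ xs, P xs) ↔ ∀ a b, P (Fin.append a b) :=
  ⟨fun h _ _ => h _, fun h xs => Fin.append_castAdd_natAdd (f := xs) ▸ h _ _⟩

namespace FirstOrder.Language.BoundedFormula

theorem isQF_foldr_inf {L : Language} {α : Type*} {n : ℕ} {φs : List (L.BoundedFormula α n)}
    (h : ∀ φ ∈ φs, φ.IsQF) : (φs.foldr (· ⊓ ·) ⊤).IsQF := by
  induction φs with
  | nil => exact IsQF.top
  | cons φ φs ih => simp_all [IsQF.inf]

end FirstOrder.Language.BoundedFormula

theorem realize_exsN {L : FirstOrder.Language} {α M : Type*} [L.Structure M] {a : ℕ} :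
    ∀ {b : ℕ} (φ : L.BoundedFormula α (a + b)) (v : α → M) (xs : Fin a → M),
      (exsN φ).Realize v xs ↔ ∃ ys : Fin b → M, φ.Realize v (Fin.append xs ys)
  | 0, φ, v, xs => by simp [exsN, Fin.append_right_nil]
  | b + 1, φ, v, xs => by
    simp only [exsN, realize_exsN φ.ex, FirstOrder.Language.BoundedFormula.realize_ex,
      ← Fin.append_snoc]
    exact ⟨fun ⟨ys, x, h⟩ => ⟨_, h⟩,
      fun ⟨ys, h⟩ => ⟨Fin.init ys, ys (Fin.last b), by rwa [Fin.snoc_init_self]⟩⟩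

namespace HeytingTerm

variable {k l : ℕ} {H : Type*} [HeytingAlgebra H]

def EquivIn (H : Type*) [HeytingAlgebra H] (t t' : HeytingTerm k) : Prop :=
  ∀ v : Fin k → H, t.eval v = t'.eval v

theorem EquivIn.trans {t₁ t₂ t₃ : HeytingTerm k} (h : EquivIn H t₁ t₂) (h' : EquivIn H t₂ t₃) :
    EquivIn H t₁ t₃ :=
  fun v => (h v).trans (h' v)

def listSup (ts : List (HeytingTerm k)) : HeytingTerm k := ts.foldr sup bot

def listInf (ts : List (HeytingTerm k)) : HeytingTerm k := ts.foldr inf top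

theorem eval_listSup_le_iff (v : Fin k → H) (ts : List (HeytingTerm k)) {c : H} :
    (listSup ts).eval v ≤ c ↔ ∀ t ∈ ts, t.eval v ≤ c := by
  induction ts with
  | nil => simp [listSup, eval]
  | cons t ts ih => simp [listSup, eval, ← ih]

theorem le_eval_listInf_iff (v : Fin k → H) (ts : List (HeytingTerm k)) {c : H} :
    c ≤ (listInf ts).eval v ↔ ∀ t ∈ ts, c ≤ t.eval v := by
  induction ts with
  | nil => simp [listInf, eval]
  | cons t ts ih => simp [listInf, eval, ← ih]

/-- `· ⊓ x` is left adjoint to `x ⇨ ·`, so it distributes over finite joins. -/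
theorem eval_listSup_inf_le_iff (v : Fin k → H) (ts ts' : List (HeytingTerm k)) {c : H} :
    (listSup ts).eval v ⊓ (listSup ts').eval v ≤ c ↔
      ∀ t ∈ ts, ∀ t' ∈ ts', t.eval v ⊓ t'.eval v ≤ c := by
  rw [← le_himp_iff, eval_listSup_le_iff]
  refine forall₂_congr fun t _ => ?_
  rw [le_himp_iff, ← le_himp_iff', eval_listSup_le_iff]
  simp only [le_himp_iff']

theorem eval_listInf_append (v : Fin k → H) (ts ts' : List (HeytingTerm k)) :
    (listInf (ts ++ ts')).eval v = (listInf ts).eval v ⊓ (listInf ts').eval v :=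
  eq_of_forall_le_iff fun c => by simp [le_eval_listInf_iff, or_imp, forall_and]

theorem listSup_equivIn {ts ts' : List (HeytingTerm k)}
    (h : ∀ t ∈ ts, ∃ t' ∈ ts', EquivIn H t t') (h' : ∀ t' ∈ ts', ∃ t ∈ ts, EquivIn H t t') :
    EquivIn H (listSup ts) (listSup ts') := by
  refine fun v => eq_of_forall_ge_iff fun c => ?_
  simp only [eval_listSup_le_iff]
  constructor
  · intro hts t' ht'
    obtain ⟨t, ht, e⟩ := h' t' ht'
    exact e v ▸ hts t ht
  · intro hts t ht
    obtain ⟨t', ht', e⟩ := h t ht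
    exact e v ▸ hts t' ht'

theorem listInf_equivIn {ts ts' : List (HeytingTerm k)}
    (h : ∀ t ∈ ts, ∃ t' ∈ ts', EquivIn H t t') (h' : ∀ t' ∈ ts', ∃ t ∈ ts, EquivIn H t t') :
    EquivIn H (listInf ts) (listInf ts') := by
  refine fun v => eq_of_forall_le_iff fun c => ?_
  simp only [le_eval_listInf_iff]
  constructor
  · intro hts t' ht'
    obtain ⟨t, ht, e⟩ := h' t' ht'
    exact e v ▸ hts t ht
  · intro hts t ht
    obtain ⟨t', ht', e⟩ := h t ht
    exact (e v).symm ▸ hts t' ht'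

theorem degree_listSup_le {ts : List (HeytingTerm k)} {e : ℕ} (h : ∀ t ∈ ts, t.degree ≤ e) :
    (listSup ts).degree ≤ e := by
  induction ts with
  | nil => simp [listSup, degree]
  | cons t ts ih => simp_all [listSup, degree]

theorem degree_listInf_le {ts : List (HeytingTerm k)} {e : ℕ} (h : ∀ t ∈ ts, t.degree ≤ e) :
    (listInf ts).degree ≤ e := by
  induction ts with
  | nil => simp [listInf, degree]
  | cons t ts ih => simp_all [listInf, degree]

/-- Sublists rather than arbitrary lists keep this list of normal forms finite. -/
def dnf (G : List (HeytingTerm k)) : List (HeytingTerm k) :=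
  (G.sublists.map listInf).sublists.map listSup

theorem degree_le_of_mem_dnf {G : List (HeytingTerm k)} {e : ℕ} (h : ∀ g ∈ G, g.degree ≤ e)
    {r : HeytingTerm k} (hr : r ∈ dnf G) : r.degree ≤ e := by
  obtain ⟨cs, hcs, rfl⟩ := List.mem_map.1 hr
  refine degree_listSup_le fun c hc => ?_
  obtain ⟨gs, hgs, rfl⟩ := List.mem_map.1 ((List.mem_sublists.1 hcs).subset hc)
  exact degree_listInf_le fun g hg => h g ((List.mem_sublists.1 hgs).subset hg)

def IsDNFOver (H : Type*) [HeytingAlgebra H] (G : List (HeytingTerm k)) (t : HeytingTerm k) :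
    Prop :=
  ∃ m : List (List (HeytingTerm k)), (∀ cs ∈ m, cs ⊆ G) ∧ EquivIn H t (listSup (m.map listInf))

namespace IsDNFOver

variable {G : List (HeytingTerm k)}

theorem of_mem_of_equivIn {t g : HeytingTerm k} (hg : g ∈ G) (e : EquivIn H t g) :
    IsDNFOver H G t :=
  ⟨[[g]], by simpa using hg, fun v => by simp [listSup, listInf, eval, e v]⟩

theorem bot : IsDNFOver H G .bot :=
  ⟨[], by simp, fun _ => rfl⟩

theorem top : IsDNFOver H G .top :=
  ⟨[[]], by simp, fun v => by simp [listSup, listInf, eval]⟩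

theorem sup {t₁ t₂ : HeytingTerm k} (h₁ : IsDNFOver H G t₁) (h₂ : IsDNFOver H G t₂) :
    IsDNFOver H G (t₁.sup t₂) := by
  obtain ⟨m₁, hm₁, e₁⟩ := h₁
  obtain ⟨m₂, hm₂, e₂⟩ := h₂
  refine ⟨m₁ ++ m₂, by simpa [or_imp, forall_and] using ⟨hm₁, hm₂⟩, fun v => ?_⟩
  refine eq_of_forall_ge_iff fun c => ?_
  simp [eval, e₁ v, e₂ v, eval_listSup_le_iff, or_imp, forall_and]

theorem inf {t₁ t₂ : HeytingTerm k} (h₁ : IsDNFOver H G t₁) (h₂ : IsDNFOver H G t₂) :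
    IsDNFOver H G (t₁.inf t₂) := by
  obtain ⟨m₁, hm₁, e₁⟩ := h₁
  obtain ⟨m₂, hm₂, e₂⟩ := h₂
  refine ⟨m₁.flatMap fun cs₁ => m₂.map (cs₁ ++ ·), ?_, fun v => ?_⟩
  · simp only [List.forall_mem_flatMap, List.forall_mem_map, List.append_subset]
    exact fun cs₁ h₁ cs₂ h₂ => ⟨hm₁ cs₁ h₁, hm₂ cs₂ h₂⟩
  refine eq_of_forall_ge_iff fun c => ?_
  simp only [eval, e₁ v, e₂ v, eval_listSup_inf_le_iff, eval_listSup_le_iff,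
    List.forall_mem_map, List.forall_mem_flatMap, eval_listInf_append]

theorem exists_mem_dnf {t : HeytingTerm k} (h : IsDNFOver H G t) : ∃ r ∈ dnf G, EquivIn H t r := by
  obtain ⟨m, hm, e⟩ := h
  have hconj : ∀ c ∈ m.map listInf, ∃ r ∈ G.sublists.map listInf, EquivIn H c r := by
    simp only [List.forall_mem_map]
    intro cs hcs
    obtain ⟨cs', hsub, h₁, h₂⟩ := List.exists_sublist_forall_exists_and (EquivIn H)
      fun t ht => ⟨t, hm cs hcs ht, fun _ => rfl⟩
    exact ⟨listInf cs', List.mem_map.2 ⟨cs', List.mem_sublists.2 hsub, rfl⟩,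
      listInf_equivIn h₁ h₂⟩
  obtain ⟨rs, hsub, h₁, h₂⟩ := List.exists_sublist_forall_exists_and _ hconj
  exact ⟨listSup rs, List.mem_map.2 ⟨rs, List.mem_sublists.2 hsub, rfl⟩,
    e.trans (listSup_equivIn h₁ h₂)⟩

end IsDNFOver

def generators (l : ℕ) : ℕ → List (HeytingTerm l)
  | 0 => (List.finRange l).map var
  | d + 1 => (List.finRange l).map var ++
      (dnf (generators l d) ×ˢ dnf (generators l d)).map fun p => p.1.himp p.2

def reps (l d : ℕ) : List (HeytingTerm l) :=
  dnf (generators l d)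

theorem var_mem_generators (i : Fin l) : ∀ d, var i ∈ generators l d
  | 0 => by simp [generators]
  | _ + 1 => by simp [generators]

theorem degree_le_of_mem_generators :
    ∀ {d : ℕ} {g : HeytingTerm l}, g ∈ generators l d → g.degree ≤ d
  | 0, g, hg => by
    obtain ⟨i, -, rfl⟩ := List.mem_map.1 hg
    rfl
  | d + 1, g, hg => by
    rcases List.mem_append.1 hg with hg | hg
    · obtain ⟨i, -, rfl⟩ := List.mem_map.1 hg
      simp [degree]
    · obtain ⟨⟨a, b⟩, hab, rfl⟩ := List.mem_map.1 hg
      rw [List.mem_product] at hab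
      simpa [degree] using ⟨degree_le_of_mem_dnf (fun _ => degree_le_of_mem_generators) hab.1,
        degree_le_of_mem_dnf (fun _ => degree_le_of_mem_generators) hab.2⟩

theorem degree_le_of_mem_reps {d : ℕ} {r : HeytingTerm l} (hr : r ∈ reps l d) : r.degree ≤ d :=
  degree_le_of_mem_dnf (fun _ => degree_le_of_mem_generators) hr

theorem isDNFOver_generators :
    ∀ (t : HeytingTerm l) {d : ℕ}, t.degree ≤ d → IsDNFOver H (generators l d) t
  | var i, d, _ => .of_mem_of_equivIn (var_mem_generators i d) fun _ => rfl
  | bot, _, _ => .bot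
  | top, _, _ => .top
  | inf a b, _, h => by
    rw [degree, max_le_iff] at h
    exact (isDNFOver_generators a h.1).inf (isDNFOver_generators b h.2)
  | sup a b, _, h => by
    rw [degree, max_le_iff] at h
    exact (isDNFOver_generators a h.1).sup (isDNFOver_generators b h.2)
  | himp a b, d, h => by
    obtain ⟨e, rfl⟩ : ∃ e, d = e + 1 := Nat.exists_eq_add_one.2 (by simp [degree] at h; omega)
    rw [degree, Nat.add_le_add_iff_right, max_le_iff] at h
    obtain ⟨ra, hra, ea⟩ := (isDNFOver_generators a h.1).exists_mem_dnf
    obtain ⟨rb, hrb, eb⟩ := (isDNFOver_generators b h.2).exists_mem_dnf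
    refine .of_mem_of_equivIn (g := ra.himp rb) ?_ fun v => by simp only [eval, ea v, eb v]
    exact List.mem_append_right _ (List.mem_map.2 ⟨(ra, rb), List.mem_product.2 ⟨hra, hrb⟩, rfl⟩)

theorem exists_mem_reps_equivIn (t : HeytingTerm l) {d : ℕ} (ht : t.degree ≤ d) :
    ∃ r ∈ reps l d, EquivIn H t r :=
  (isDNFOver_generators t ht).exists_mem_dnf

end HeytingTerm

open HeytingTerm

/-- A system `(t, s₁, …, s_κ)` in `l` parameters and one unknown, the `sᵢ` given as a list. -/
abbrev System (l : ℕ) : Type := HeytingTerm (l + 1) × List (HeytingTerm (l + 1))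

def systemReps (l d : ℕ) : List (System l) :=
  reps (l + 1) d ×ˢ (reps (l + 1) d).sublists

section IndexProp

variable {l d n : ℕ} {H : Type*} [HeytingAlgebra H]

def System.Solves (p : System l) (a : Fin l → H) (x : H) : Prop :=
  p.1.eval (Fin.snoc a x) = ⊤ ∧ ∀ s ∈ p.2, s.eval (Fin.snoc a x) ≠ ⊤

theorem System.solves_congr {p q : System l} (h : EquivIn H p.1 q.1)
    (h₁ : ∀ s ∈ p.2, ∃ s' ∈ q.2, EquivIn H s s') (h₂ : ∀ s' ∈ q.2, ∃ s ∈ p.2, EquivIn H s s')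
    (a : Fin l → H) (x : H) : p.Solves a x ↔ q.Solves a x := by
  refine and_congr (by rw [h]) ⟨fun hp s' hs' => ?_, fun hq s hs => ?_⟩
  · obtain ⟨s, hs, e⟩ := h₂ s' hs'
    exact e _ ▸ hp s hs
  · obtain ⟨s', hs', e⟩ := h₁ s hs
    exact (e _).symm ▸ hq s' hs'

theorem hasSolution_iff_exists_solves {κ : ℕ} (t : HeytingTerm (l + 1))
    (s : Fin κ → HeytingTerm (l + 1)) (a : Fin l → H) :
    HasSolution t s a ↔ ∃ x, System.Solves (t, List.ofFn s) a x := by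
  simp only [HasSolution, IsSolution, System.Solves, List.forall_mem_ofFn_iff,
    Fin.append_right_eq_snoc]
  exact ⟨fun ⟨b, hb⟩ => ⟨b 0, hb⟩, fun ⟨x, hx⟩ => ⟨fun _ => x, hx⟩⟩

theorem exists_mem_systemReps_solves_iff {κ : ℕ} {t : HeytingTerm (l + 1)}
    {s : Fin κ → HeytingTerm (l + 1)} (ht : t.degree ≤ d) (hs : ∀ k, (s k).degree ≤ d) :
    ∃ p ∈ systemReps l d, ∀ a x, System.Solves (t, List.ofFn s) a x ↔ p.Solves (H := H) a x := by
  obtain ⟨t', ht', e⟩ := exists_mem_reps_equivIn (H := H) t ht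
  obtain ⟨S, hS, h₁, h₂⟩ := List.exists_sublist_forall_exists_and (EquivIn H)
    (as := List.ofFn s) (bs := reps (l + 1) d)
    (by simpa using fun k => exists_mem_reps_equivIn (s k) (hs k))
  exact ⟨(t', S), List.mem_product.2 ⟨ht', List.mem_sublists.2 hS⟩,
    System.solves_congr e h₁ h₂⟩

def AgreeOnReps (n : ℕ) (a a' : Fin l → H) : Prop :=
  ∀ r ∈ reps l n, (r.eval a = ⊤ ↔ r.eval a' = ⊤)

theorem simDeg_iff_agreeOnReps {a a' : Fin l → H} : SimDeg n a a' ↔ AgreeOnReps n a a' := by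
  refine ⟨fun h r hr => h r (degree_le_of_mem_reps hr), fun h t ht => ?_⟩
  obtain ⟨r, hr, e⟩ := exists_mem_reps_equivIn (H := H) t ht
  rw [e a, e a']
  exact h r hr

/-- Only one implication is required: `AgreeOnReps` is symmetric. -/
def RepIndexProp (H : Type*) [HeytingAlgebra H] (l d n : ℕ) : Prop :=
  ∀ a a' : Fin l → H, AgreeOnReps n a a' →
    ∀ p ∈ systemReps l d, (∃ x, p.Solves a x) → ∃ x, p.Solves a' x

theorem indexProp_iff_repIndexProp : IndexProp H l d n ↔ RepIndexProp H l d n := by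
  constructor
  · intro h a a' hag p hp
    have hdeg : ∀ r ∈ reps (l + 1) d, r.degree ≤ d := fun _ => degree_le_of_mem_reps
    obtain ⟨ht, hs⟩ := List.mem_product.1 hp
    have := h a a' (simDeg_iff_agreeOnReps.2 hag) _ p.1 p.2.get (hdeg _ ht)
      fun k => hdeg _ ((List.mem_sublists.1 hs).subset (List.get_mem _ k))
    simpa [hasSolution_iff_exists_solves] using this.1
  · intro h a a' hsim κ t s ht hs
    obtain ⟨p, hp, e⟩ := exists_mem_systemReps_solves_iff (H := H) ht hs
    have hag := simDeg_iff_agreeOnReps.1 hsim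
    simp only [hasSolution_iff_exists_solves, e]
    exact ⟨h a a' hag p hp, h a' a (fun r hr => (hag r hr).symm) p hp⟩

theorem IndexProp.mono {m : ℕ} (h : IndexProp H l d m) (hmn : m ≤ n) : IndexProp H l d n :=
  fun a a' hsim => h a a' fun t ht => hsim t (ht.trans hmn)

theorem hIndex_le_iff_indexProp : hIndex H l d ≤ n ↔ IndexProp H l d n := by
  refine ⟨fun h => ?_, fun h => sInf_le ⟨n, rfl, h⟩⟩
  have hne : {x : ℕ∞ | ∃ m : ℕ, x = ↑m ∧ IndexProp H l d m}.Nonempty := by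
    rw [Set.nonempty_iff_ne_empty]
    rintro hemp
    simp [hIndex, hemp] at h
  obtain ⟨m, hm, hprop⟩ := csInf_mem hne
  rw [hIndex, hm, Nat.cast_le] at h
  exact hprop.mono h

end IndexProp

namespace LHA

open FirstOrder Language BoundedFormula Fin

/-- The `LHA`-term of a Heyting term whose `i`-th variable is the bound variable `f i`. -/
def termOf {k M : ℕ} (f : Fin k → Fin M) : HeytingTerm k → LHA.Term (Empty ⊕ Fin M)
  | .var i => Term.var (Sum.inr (f i))
  | .bot => Term.func (LHAFunc.bot : LHA.Functions 0) Fin.elim0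
  | .top => Term.func (LHAFunc.top : LHA.Functions 0) Fin.elim0
  | .inf a b => Term.func (LHAFunc.inf : LHA.Functions 2) ![termOf f a, termOf f b]
  | .sup a b => Term.func (LHAFunc.sup : LHA.Functions 2) ![termOf f a, termOf f b]
  | .himp a b => Term.func (LHAFunc.himp : LHA.Functions 2) ![termOf f a, termOf f b]

def eqTop {k M : ℕ} (f : Fin k → Fin M) (t : HeytingTerm k) : LHA.BoundedFormula Empty M :=
  (termOf f t).bdEqual (termOf f .top)

def solvesFormula {l M : ℕ} (p : System l) (f : Fin l → Fin M) (x : Fin M) :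
    LHA.BoundedFormula Empty M :=
  eqTop (Fin.snoc f x) p.1 ⊓ (p.2.map fun s => (eqTop (Fin.snoc f x) s).not).foldr (· ⊓ ·) ⊤

def agreeFormula {l M : ℕ} (n : ℕ) (f f' : Fin l → Fin M) : LHA.BoundedFormula Empty M :=
  ((reps l n).map fun r => (eqTop f r).iff (eqTop f' r)).foldr (· ⊓ ·) ⊤

/-- The bound variables are `a`, `a'` (the parameters), then `u` and `w`, with one entry for each
representative system. -/
def indexMatrix (l d n : ℕ) :
    LHA.BoundedFormula Empty (l + l + (systemReps l d).length + (systemReps l d).length) :=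
  let N := (systemReps l d).length
  let a (i : Fin l) := castAdd N (castAdd N (castAdd l i))
  let a' (i : Fin l) := castAdd N (castAdd N (natAdd l i))
  (agreeFormula n a a').imp <| ((List.finRange N).map fun j =>
    (solvesFormula ((systemReps l d).get j) a (castAdd N (natAdd (l + l) j))).imp
      (solvesFormula ((systemReps l d).get j) a' (natAdd (l + l + N) j))).foldr (· ⊓ ·) ⊤

section IsQF

variable {k l M : ℕ}

theorem isQF_eqTop (f : Fin k → Fin M) (t : HeytingTerm k) : (eqTop f t).IsQF :=
  (IsAtomic.equal _ _).isQF

theorem isQF_solvesFormula (p : System l) (f : Fin l → Fin M) (x : Fin M) :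
    (solvesFormula p f x).IsQF :=
  (isQF_eqTop _ _).inf (isQF_foldr_inf (by simpa using fun s _ => (isQF_eqTop _ s).not))

theorem isQF_agreeFormula (n : ℕ) (f f' : Fin l → Fin M) : (agreeFormula n f f').IsQF :=
  isQF_foldr_inf <| by
    simpa [BoundedFormula.iff] using fun r _ => ((isQF_eqTop f r).imp (isQF_eqTop f' r)).inf
      ((isQF_eqTop f' r).imp (isQF_eqTop f r))

theorem isQF_indexMatrix (l d n : ℕ) : (indexMatrix l d n).IsQF :=
  (isQF_agreeFormula _ _ _).imp <| isQF_foldr_inf <| by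
    simpa only [List.forall_mem_map, List.mem_finRange, true_imp_iff] using
      fun j => (isQF_solvesFormula _ _ _).imp (isQF_solvesFormula _ _ _)

end IsQF

section Realize

variable {H : Type*} [HeytingAlgebra H] {k l d n M : ℕ} (v : Empty → H)

theorem realize_termOf (f : Fin k → Fin M) (t : HeytingTerm k) (zs : Fin M → H) :
    (termOf f t).realize (Sum.elim v zs) = t.eval (zs ∘ f) := by
  induction t with
  | var i => rfl
  | bot => rfl
  | top => rfl
  | inf a b iha ihb | sup a b iha ihb | himp a b iha ihb =>
    simp only [termOf, Term.realize, HeytingTerm.eval, ← iha, ← ihb]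
    rfl

@[simp]
theorem realize_eqTop (f : Fin k → Fin M) (t : HeytingTerm k) (zs : Fin M → H) :
    (eqTop f t).Realize v zs ↔ t.eval (zs ∘ f) = ⊤ := by
  simp only [eqTop, realize_bdEqual, realize_termOf]
  rfl

@[simp]
theorem realize_solvesFormula (p : System l) (f : Fin l → Fin M) (x : Fin M) (zs : Fin M → H) :
    (solvesFormula p f x).Realize v zs ↔ p.Solves (zs ∘ f) (zs x) := by
  simp [solvesFormula, System.Solves, Fin.comp_snoc]

@[simp]
theorem realize_agreeFormula (f f' : Fin l → Fin M) (zs : Fin M → H) :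
    (agreeFormula n f f').Realize v zs ↔ AgreeOnReps n (zs ∘ f) (zs ∘ f') := by
  simp [agreeFormula, AgreeOnReps]

theorem realize_indexMatrix (a a' : Fin l → H) (u w : Fin (systemReps l d).length → H) :
    (indexMatrix l d n).Realize v (append (append (append a a') u) w) ↔
      (AgreeOnReps n a a' → ∀ j, ((systemReps l d).get j).Solves a (u j) →
        ((systemReps l d).get j).Solves a' (w j)) := by
  simp only [indexMatrix, realize_imp, realize_agreeFormula, realize_foldr_inf,
    List.forall_mem_map, List.mem_finRange, true_imp_iff, realize_solvesFormula,
    Function.comp_def, append_left, append_right]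

end Realize

variable {H : Type*} [HeytingAlgebra H] {l d n : ℕ}

theorem repIndexProp_iff_forall_exists_realize_indexMatrix :
    RepIndexProp H l d n ↔ ∀ (a a' : Fin l → H) u, ∃ w,
      (indexMatrix l d n).Realize (default : Empty → H) (append (append (append a a') u) w) := by
  simp only [realize_indexMatrix]
  constructor
  · intro h a a' u
    have : ∀ j, ∃ x, AgreeOnReps n a a' → ((systemReps l d).get j).Solves a (u j) →
        ((systemReps l d).get j).Solves a' x := fun j => by
      by_cases hj : AgreeOnReps n a a' ∧ ((systemReps l d).get j).Solves a (u j)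
      · obtain ⟨x, hx⟩ := h a a' hj.1 _ (List.get_mem _ j) ⟨_, hj.2⟩
        exact ⟨x, fun _ _ => hx⟩
      · exact ⟨⊤, fun h₁ h₂ => absurd ⟨h₁, h₂⟩ hj⟩
    choose w hw using this
    exact ⟨w, fun hag j => hw j hag⟩
  · rintro h a a' hag p hp ⟨x, hx⟩
    obtain ⟨j, rfl⟩ := List.mem_iff_get.1 hp
    obtain ⟨w, hw⟩ := h a a' fun _ => x
    exact ⟨w j, hw hag j hx⟩

theorem models_indexSentence_iff :
    H ⊨ (exsN (indexMatrix l d n)).alls ↔ RepIndexProp H l d n := by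
  rw [repIndexProp_iff_forall_exists_realize_indexMatrix, Sentence.Realize, realize_alls]
  simp only [realize_exsN, Fin.forall_append_iff]

end LHA

/-- For all `l`, `d`, `n` there is an `∀∃`-sentence `σ` such that a Heyting algebra `A`
satisfies `σ` iff `h_{l,d}(A) ≤ n`. -/
theorem hIndex_le_iff_sentence (l d n : ℕ) :
    ∃ σ : LHA.Sentence,
      (∃ (a b : ℕ) (θ : LHA.BoundedFormula Empty (a + b)), θ.IsQF ∧ σ = (exsN θ).alls) ∧
      ∀ (A : Type*) [HeytingAlgebra A], (hIndex A l d ≤ (n : ℕ∞) ↔ A ⊨ σ) :=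
  ⟨(exsN (LHA.indexMatrix l d n)).alls, ⟨_, _, _, LHA.isQF_indexMatrix l d n, rfl⟩, fun A _ => by
    rw [hIndex_le_iff_indexProp, indexProp_iff_repIndexProp, LHA.models_indexSentence_iff]⟩
end
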